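/- arXiv:2601.13519 — 4 statements merged into one kernel-verified Lean document; each statement's English description precedes it below -/
import Mathlib

section
/- (OGD G* regret bound) Let ℓ_1,...,ℓ_T : R^n → R be convex and L-smooth, let X be closed convex with diameter at most D, and run projected online gradient descent x^{t+1} = Π_X[x^t − η∇ℓ_t(x^t)] with η ∈ (0, 1/L). Then for every x ∈ X: Σ_{t=1}^T [ℓ_t(x^t) − ℓ_t(x)] ≤ ‖x^1 − x‖²/(2η) + (η/(2(1 − ηL)))·Σ_{t=1}^T ‖∇ℓ_t(x)‖². -/
/-!
Projection onto a convex set does not increase distances to points of the set, so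
`‖x (t+1) - y‖² ≤ ‖x t - y‖² - 2η⟪g, x t - y⟫ + η²‖g‖²` with `g = ∇ℓ_t (x t)`. Co-coercivity of the
gradient of a convex `L`-smooth function bounds `⟪g, x t - y⟫` below by the regret
`ℓ_t (x t) - ℓ_t y` plus `‖g - ∇ℓ_t y‖² / (2L)`, and this bonus absorbs `η²‖g‖²` by Young's
inequality with weights `ηL` and `1 - ηL`, leaving `η² / (1 - ηL) ‖∇ℓ_t y‖²`. Summing over `t`
telescopes.
-/

open Finset AffineMap
open scoped RealInnerProductSpace

theorem sq_le_sq_div_add_sq_div {s : ℝ} (hs₀ : 0 < s) (hs₁ : s < 1) (u v : ℝ) :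
    (u + v) ^ 2 ≤ u ^ 2 / s + v ^ 2 / (1 - s) := by
  have hs : 0 < 1 - s := sub_pos.2 hs₁
  have key : u ^ 2 / s + v ^ 2 / (1 - s) - (u + v) ^ 2 =
      ((1 - s) * u - s * v) ^ 2 / (s * (1 - s)) := by
    field_simp
    ring
  have hsq : 0 ≤ ((1 - s) * u - s * v) ^ 2 / (s * (1 - s)) := by positivity
  linarith

theorem sq_norm_le_sq_norm_sub_div_add_sq_norm_div {F : Type*} [SeminormedAddCommGroup F]
    {s : ℝ} (hs₀ : 0 < s) (hs₁ : s < 1) (a b : F) :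
    ‖a‖ ^ 2 ≤ ‖a - b‖ ^ 2 / s + ‖b‖ ^ 2 / (1 - s) :=
  (pow_le_pow_left₀ (norm_nonneg a) (norm_le_norm_sub_add a b) 2).trans
    (sq_le_sq_div_add_sq_div hs₀ hs₁ _ _)

theorem Convex.norm_sub_le_of_forall_norm_sub_le {F : Type*} [NormedAddCommGroup F]
    [InnerProductSpace ℝ F] {X : Set F} (hX : Convex ℝ X) {u p : F} (hp : p ∈ X)
    (hnearest : ∀ z ∈ X, ‖u - p‖ ≤ ‖u - z‖) {w : F} (hw : w ∈ X) :
    ‖p - w‖ ≤ ‖u - w‖ := by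
  have : Nonempty X := ⟨⟨p, hp⟩⟩
  have hinf : ‖u - p‖ = ⨅ z : X, ‖u - z‖ :=
    le_antisymm (le_ciInf fun z ↦ hnearest z z.2)
      (ciInf_le ⟨0, Set.forall_mem_range.2 fun _ ↦ norm_nonneg _⟩ (⟨p, hp⟩ : X))
  have hobtuse := (norm_eq_iInf_iff_real_inner_le_zero hX hp).1 hinf w hw
  have hexpand : ‖u - w‖ ^ 2 = ‖u - p‖ ^ 2 - 2 * ⟪u - p, w - p⟫ + ‖p - w‖ ^ 2 := by
    rw [show u - w = (u - p) - (w - p) by abel, norm_sub_sq_real, ← norm_neg (w - p), neg_sub]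
  refine (pow_le_pow_iff_left₀ (norm_nonneg _) (norm_nonneg _) two_ne_zero).1 ?_
  nlinarith [sq_nonneg ‖u - p‖]

section

variable {E : Type*} [NormedAddCommGroup E] [InnerProductSpace ℝ E] [CompleteSpace E]
  {f : E → ℝ} {L : ℝ}

theorem hasDerivAt_comp_add_smul_gradient {a v : E} {t : ℝ}
    (hf : DifferentiableAt ℝ f (a + t • v)) :
    HasDerivAt (fun s : ℝ ↦ f (a + s • v)) ⟪gradient f (a + t • v), v⟫ t :=
  (hf.hasGradientAt.hasFDerivAt.comp_hasDerivAt t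
    (((hasDerivAt_id t).smul_const v).const_add a)).congr_deriv (by simp)

theorem ConvexOn.add_inner_gradient_le (hc : ConvexOn ℝ Set.univ f) {a : E}
    (hf : DifferentiableAt ℝ f a) (b : E) :
    f a + ⟪gradient f a, b - a⟫ ≤ f b := by
  have hg : ConvexOn ℝ Set.univ (fun s : ℝ ↦ f (a + s • (b - a))) := by
    have h := hc.comp_affineMap (lineMap a b : ℝ →ᵃ[ℝ] E)
    rw [Set.preimage_univ] at h
    refine h.congr fun s _ ↦ ?_
    simp [lineMap_apply_module', add_comm]
  have hd := hasDerivAt_comp_add_smul_gradient (t := 0) (v := b - a) (by simpa using hf)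
  have := hg.le_slope_of_hasDerivAt (Set.mem_univ 0) (Set.mem_univ 1) one_pos hd
  simp only [slope, zero_smul, add_zero, one_smul, add_sub_cancel, vsub_eq_sub, sub_zero,
    inv_one] at this
  linarith

theorem le_add_inner_gradient_add_sq_of_gradient_lipschitz (hf : Differentiable ℝ f)
    (hs : ∀ p q, ‖gradient f p - gradient f q‖ ≤ L * ‖p - q‖) (a b : E) :
    f b ≤ f a + ⟪gradient f a, b - a⟫ + L / 2 * ‖b - a‖ ^ 2 := by
  set v := b - a
  set φ : ℝ → ℝ := fun t ↦ f (a + t • v) - t * ⟪gradient f a, v⟫ - L / 2 * ‖v‖ ^ 2 * t ^ 2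
  have hφ : ∀ t, HasDerivAt φ
      (⟪gradient f (a + t • v), v⟫ - ⟪gradient f a, v⟫ - L * ‖v‖ ^ 2 * t) t := fun t ↦ by
    have h := ((hasDerivAt_comp_add_smul_gradient (a := a) (v := v) (hf _)).sub
      ((hasDerivAt_id t).mul_const ⟪gradient f a, v⟫)).sub
      ((hasDerivAt_pow 2 t).const_mul (L / 2 * ‖v‖ ^ 2))
    exact h.congr_deriv (by simp; ring)
  have hanti : AntitoneOn φ (Set.Icc 0 1) := by
    refine antitoneOn_of_deriv_nonpos (convex_Icc 0 1)
      (fun t _ ↦ (hφ t).continuousAt.continuousWithinAt)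
      (fun t _ ↦ (hφ t).differentiableAt.differentiableWithinAt) fun t ht ↦ ?_
    rw [interior_Icc] at ht
    rw [(hφ t).deriv, ← inner_sub_left]
    calc ⟪gradient f (a + t • v) - gradient f a, v⟫ - L * ‖v‖ ^ 2 * t
        ≤ L * ‖a + t • v - a‖ * ‖v‖ - L * ‖v‖ ^ 2 * t := by
          gcongr
          exact (real_inner_le_norm _ _).trans
            (mul_le_mul_of_nonneg_right (hs _ _) (norm_nonneg _))
      _ = 0 := by
          rw [add_sub_cancel_left, norm_smul, Real.norm_of_nonneg ht.1.le]
          ring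
  have := hanti (Set.left_mem_Icc.2 zero_le_one) (Set.right_mem_Icc.2 zero_le_one) zero_le_one
  simp only [φ, v, zero_smul, add_zero, one_smul, add_sub_cancel] at this
  linarith

theorem ConvexOn.add_inner_gradient_add_sq_norm_sub_le (hc : ConvexOn ℝ Set.univ f)
    (hf : Differentiable ℝ f) (hL : 0 < L)
    (hs : ∀ p q, ‖gradient f p - gradient f q‖ ≤ L * ‖p - q‖) (a b : E) :
    f a + ⟪gradient f a, b - a⟫ + ‖gradient f b - gradient f a‖ ^ 2 / (2 * L) ≤ f b := by
  set d := gradient f b - gradient f a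
  -- compare the first-order bound at `a` with the descent bound at `b`, both at the point
  -- reached from `b` by a gradient step of length `1 / L` in the direction `d`
  set w := b - L⁻¹ • d
  have h₁ := hc.add_inner_gradient_le (hf a) w
  have h₂ := le_add_inner_gradient_add_sq_of_gradient_lipschitz hf hs b w
  have hwa : w - a = (b - a) - L⁻¹ • d := by simp only [w]; abel
  have hwb : w - b = -(L⁻¹ • d) := by simp only [w]; abel
  have hd : L⁻¹ * ⟪gradient f b, d⟫ - L⁻¹ * ⟪gradient f a, d⟫ = L⁻¹ * ‖d‖ ^ 2 := by
    rw [← mul_sub, ← inner_sub_left, real_inner_self_eq_norm_sq]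
  rw [hwa, inner_sub_right, real_inner_smul_right] at h₁
  rw [hwb, inner_neg_right, real_inner_smul_right, norm_neg, norm_smul,
    Real.norm_of_nonneg (inv_nonneg.2 hL.le)] at h₂
  have e : ‖d‖ ^ 2 / (2 * L) = L⁻¹ * ‖d‖ ^ 2 - L / 2 * (L⁻¹ * ‖d‖) ^ 2 := by
    field_simp; ring
  linarith

theorem ConvexOn.sub_le_of_proj_gradient_step (hc : ConvexOn ℝ Set.univ f)
    (hf : Differentiable ℝ f) (hL : 0 < L)
    (hs : ∀ p q, ‖gradient f p - gradient f q‖ ≤ L * ‖p - q‖) {η : ℝ} (hη₀ : 0 < η)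
    (hηL : η * L < 1) {X : Set E} (hX : Convex ℝ X) {x x' y : E} (hx' : x' ∈ X)
    (hnearest : ∀ z ∈ X, ‖x - η • gradient f x - x'‖ ≤ ‖x - η • gradient f x - z‖)
    (hy : y ∈ X) :
    f x - f y ≤ (‖x - y‖ ^ 2 - ‖x' - y‖ ^ 2) / (2 * η) +
      η / (2 * (1 - η * L)) * ‖gradient f y‖ ^ 2 := by
  set g := gradient f x
  set h := gradient f y
  have hproj : ‖x' - y‖ ^ 2 ≤ ‖x - y‖ ^ 2 - 2 * η * ⟪g, x - y⟫ + η ^ 2 * ‖g‖ ^ 2 := by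
    have := pow_le_pow_left₀ (norm_nonneg _)
      (hX.norm_sub_le_of_forall_norm_sub_le hx' hnearest hy) 2
    rwa [show x - η • g - y = (x - y) - η • g by abel, norm_sub_sq_real (x - y),
      real_inner_smul_right, norm_smul, Real.norm_of_nonneg hη₀.le, mul_pow, real_inner_comm,
      ← mul_assoc] at this
  have hcoco := hc.add_inner_gradient_add_sq_norm_sub_le hf hL hs x y
  rw [← neg_sub x y, inner_neg_right] at hcoco
  have hyoung := sq_norm_le_sq_norm_sub_div_add_sq_norm_div (mul_pos hη₀ hL) hηL g h
  rw [norm_sub_rev] at hyoung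
  have e₁ : 2 * η * (‖h - g‖ ^ 2 / (2 * L)) = η ^ 2 * (‖h - g‖ ^ 2 / (η * L)) := by
    field_simp
  have e₂ : η / (2 * (1 - η * L)) * ‖h‖ ^ 2 = η ^ 2 * (‖h‖ ^ 2 / (1 - η * L)) / (2 * η) := by
    field_simp
  rw [e₂, ← add_div, le_div_iff₀ (by positivity)]
  linarith [mul_le_mul_of_nonneg_left hcoco (by positivity : (0 : ℝ) ≤ 2 * η),
    mul_le_mul_of_nonneg_left hyoung (sq_nonneg η)]

end

theorem stmt8_general (n T : ℕ) (L η : ℝ) (hL : 0 < L)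
    (hη : η ∈ Set.Ioo 0 (1 / L))
    (ℓ : ℕ → EuclideanSpace ℝ (Fin n) → ℝ)
    (hconv : ∀ t, ConvexOn ℝ Set.univ (ℓ t))
    (hdiff : ∀ t, Differentiable ℝ (ℓ t))
    (hsmooth : ∀ t, ∀ x y, ‖gradient (ℓ t) x - gradient (ℓ t) y‖ ≤ L * ‖x - y‖)
    (X : Set (EuclideanSpace ℝ (Fin n))) (hXconv : Convex ℝ X)
    (proj : EuclideanSpace ℝ (Fin n) → EuclideanSpace ℝ (Fin n))
    (hprojX : ∀ y, proj y ∈ X)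
    (hproj : ∀ y, ∀ z ∈ X, ‖y - proj y‖ ≤ ‖y - z‖)
    (x : ℕ → EuclideanSpace ℝ (Fin n))
    (hrec : ∀ t < T, x (t + 1) = proj (x t - η • gradient (ℓ t) (x t))) :
    ∀ y ∈ X,
      ∑ t ∈ Finset.range T, (ℓ t (x t) - ℓ t y) ≤
        ‖x 0 - y‖ ^ 2 / (2 * η) +
          (η / (2 * (1 - η * L))) * ∑ t ∈ Finset.range T, ‖gradient (ℓ t) y‖ ^ 2 := by
  intro y hy
  obtain ⟨hη₀, hηL⟩ := hη
  rw [lt_div_iff₀ hL] at hηL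
  have hstep : ∀ t ∈ range T, ℓ t (x t) - ℓ t y ≤
      (‖x t - y‖ ^ 2 - ‖x (t + 1) - y‖ ^ 2) / (2 * η) +
        η / (2 * (1 - η * L)) * ‖gradient (ℓ t) y‖ ^ 2 := fun t ht ↦ by
    rw [hrec t (mem_range.1 ht)]
    exact (hconv t).sub_le_of_proj_gradient_step (hdiff t) hL (hsmooth t) hη₀ hηL hXconv
      (hprojX _) (hproj _) hy
  calc ∑ t ∈ range T, (ℓ t (x t) - ℓ t y)
      ≤ ∑ t ∈ range T, ((‖x t - y‖ ^ 2 - ‖x (t + 1) - y‖ ^ 2) / (2 * η) +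
          η / (2 * (1 - η * L)) * ‖gradient (ℓ t) y‖ ^ 2) := sum_le_sum hstep
    _ = (‖x 0 - y‖ ^ 2 - ‖x T - y‖ ^ 2) / (2 * η) +
          η / (2 * (1 - η * L)) * ∑ t ∈ range T, ‖gradient (ℓ t) y‖ ^ 2 := by
      rw [sum_add_distrib, ← sum_div, sum_range_sub' (fun t ↦ ‖x t - y‖ ^ 2), mul_sum]
    _ ≤ ‖x 0 - y‖ ^ 2 / (2 * η) +
          η / (2 * (1 - η * L)) * ∑ t ∈ range T, ‖gradient (ℓ t) y‖ ^ 2 := by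
      gcongr
      exact sub_le_self _ (sq_nonneg _)

theorem stmt8 (n T : ℕ) (L D η : ℝ) (hL : 0 < L) (hD : 0 < D)
    (hη : η ∈ Set.Ioo 0 (1 / L))
    (ℓ : ℕ → EuclideanSpace ℝ (Fin n) → ℝ)
    (hconv : ∀ t, ConvexOn ℝ Set.univ (ℓ t))
    (hdiff : ∀ t, Differentiable ℝ (ℓ t))
    (hsmooth : ∀ t, ∀ x y, ‖gradient (ℓ t) x - gradient (ℓ t) y‖ ≤ L * ‖x - y‖)
    (X : Set (EuclideanSpace ℝ (Fin n))) (hXconv : Convex ℝ X) (hXclosed : IsClosed X)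
    (hXdiam : Metric.diam X ≤ D)
    (proj : EuclideanSpace ℝ (Fin n) → EuclideanSpace ℝ (Fin n))
    (hprojX : ∀ y, proj y ∈ X)
    (hproj : ∀ y, ∀ z ∈ X, ‖y - proj y‖ ≤ ‖y - z‖)
    (x : ℕ → EuclideanSpace ℝ (Fin n)) (hx0 : x 0 ∈ X)
    (hrec : ∀ t < T, x (t + 1) = proj (x t - η • gradient (ℓ t) (x t))) :
    ∀ y ∈ X,
      ∑ t ∈ Finset.range T, (ℓ t (x t) - ℓ t y) ≤
        ‖x 0 - y‖ ^ 2 / (2 * η) +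
          (η / (2 * (1 - η * L))) * ∑ t ∈ Finset.range T, ‖gradient (ℓ t) y‖ ^ 2 :=
  stmt8_general n T L η hL hη ℓ hconv hdiff hsmooth X hXconv proj hprojX hproj x hrec
end

section
/- (OGD with larger steps) Under the same setting as the OGD G* bound but with η ∈ (0, 2/L), online gradient descent satisfies, for every x ∈ X: Σ_{t=1}^T [ℓ_t(x^t) − ℓ_t(x)] ≤ ‖x^1 − x‖²/((2 − ηL)η) + (η/(2 − ηL))·[L·L_T(x) + (1/(2 − ηL))·G_T(x)], where L_T(x) = Σ_t [ℓ_t(x) − inf ℓ_t] and G_T(x) = Σ_t ‖∇ℓ_t(x)‖². -/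
/-!
Fix a comparator `y ∈ X` and write `gₜ = ∇ℓₜ(xᵗ)`. Since the projection onto a convex set makes
an obtuse angle with every point of the set, `‖xᵗ⁺¹ - y‖² ≤ ‖xᵗ - y‖² - 2η⟪gₜ, xᵗ - y⟫ + η²‖gₜ‖²`.
Co-coercivity of convex `L`-smooth functions bounds `ℓₜ(xᵗ) - ℓₜ(y)` by
`⟪gₜ, xᵗ - y⟫ - ‖gₜ - ∇ℓₜ(y)‖² / (2L)`. Half of the term `η²‖gₜ‖²` is absorbed by this negative
term after completing the square, the other half by self-boundedness
`‖gₜ‖² ≤ 2L (ℓₜ(xᵗ) - inf ℓₜ)`, which costs a fraction `ηL/2` of the regret itself; this is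
where `η < 2/L` enters. Summing over `t`, the distance terms telescope.
-/

open Finset Set
open scoped RealInnerProductSpace

section

variable {E : Type*} [SeminormedAddCommGroup E]

theorem half_mul_norm_sq_sub_norm_sub_sq_div_le {L η : ℝ} (hL : 0 < L) (hη : 0 ≤ η)
    (hηL : η * L < 2) (g h : E) :
    η / 2 * ‖g‖ ^ 2 - ‖g - h‖ ^ 2 / L ≤ η / (2 - η * L) * ‖h‖ ^ 2 := by
  have hA : 0 < 2 - η * L := by linarith
  have htri : ‖g‖ ≤ ‖g - h‖ + ‖h‖ := norm_le_norm_sub_add g h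
  have hsq : ‖g‖ ^ 2 ≤ (‖g - h‖ + ‖h‖) ^ 2 := pow_le_pow_left₀ (norm_nonneg g) htri 2
  have hkey : η * L * (2 - η * L) * ‖g‖ ^ 2 ≤
      2 * (2 - η * L) * ‖g - h‖ ^ 2 + 2 * (η * L) * ‖h‖ ^ 2 := by
    nlinarith [sq_nonneg ((2 - η * L) * ‖g - h‖ - η * L * ‖h‖),
      mul_le_mul_of_nonneg_left hsq (by positivity : 0 ≤ η * L * (2 - η * L))]
  rw [← sub_nonneg]
  have e : η / (2 - η * L) * ‖h‖ ^ 2 - (η / 2 * ‖g‖ ^ 2 - ‖g - h‖ ^ 2 / L) =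
      (2 * (2 - η * L) * ‖g - h‖ ^ 2 + 2 * (η * L) * ‖h‖ ^ 2 - η * L * (2 - η * L) * ‖g‖ ^ 2) /
        (2 * L * (2 - η * L)) := by
    field_simp
    ring
  rw [e]
  exact div_nonneg (by linarith) (by positivity)

end

section

variable {F : Type*} [NormedAddCommGroup F] [InnerProductSpace ℝ F] [CompleteSpace F]
  {f : F → ℝ} {G : F → F} {g : F} {L : ℝ}

theorem HasGradientAt.hasDerivAt_comp_lineMap {x y : F} {s : ℝ}
    (h : HasGradientAt f g (AffineMap.lineMap x y s)) :
    HasDerivAt (f ∘ AffineMap.lineMap x y) ⟪g, y - x⟫ s := by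
  simpa using (hasGradientAt_iff_hasFDerivAt.mp h).comp_hasDerivAt s AffineMap.hasDerivAt_lineMap

theorem ConvexOn.add_inner_le {x : F} (hf : ConvexOn ℝ univ f) (h : HasGradientAt f g x) (y : F) :
    f x + ⟪g, y - x⟫ ≤ f y := by
  have hφ : ConvexOn ℝ univ (fun s : ℝ => f (AffineMap.lineMap x y s)) :=
    hf.comp_affineMap (AffineMap.lineMap x y)
  have h0 : HasDerivAt (fun s : ℝ => f (AffineMap.lineMap x y s)) ⟪g, y - x⟫ 0 :=
    HasGradientAt.hasDerivAt_comp_lineMap (by rwa [AffineMap.lineMap_apply_zero])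
  have hslope := hφ.le_slope_of_hasDerivAt (mem_univ (0 : ℝ)) (mem_univ 1) zero_lt_one h0
  simp only [slope_def_field, AffineMap.lineMap_apply_one, AffineMap.lineMap_apply_zero, sub_zero,
    div_one] at hslope
  linarith

theorem le_add_inner_add_half_mul_norm_sq (hG : ∀ z, HasGradientAt f (G z) z)
    (hlip : ∀ a b, ‖G a - G b‖ ≤ L * ‖a - b‖) (x y : F) :
    f y ≤ f x + ⟪G x, y - x⟫ + L / 2 * ‖y - x‖ ^ 2 := by
  -- the gap between `f` and its quadratic upper model along the segment is antitone
  set φ : ℝ → ℝ := fun s =>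
    f (AffineMap.lineMap x y s) - s * ⟪G x, y - x⟫ - L / 2 * s ^ 2 * ‖y - x‖ ^ 2
  have hφ' : ∀ s, HasDerivAt φ
      (⟪G (AffineMap.lineMap x y s) - G x, y - x⟫ - L * s * ‖y - x‖ ^ 2) s := by
    intro s
    refine ((((hG _).hasDerivAt_comp_lineMap).sub ((hasDerivAt_id s).mul_const _)).sub
      (((hasDerivAt_pow 2 s).const_mul (L / 2)).mul_const _)).congr_deriv ?_
    rw [inner_sub_left]
    push_cast
    ring
  have hanti : AntitoneOn φ (Icc 0 1) := by
    refine antitoneOn_of_hasDerivWithinAt_nonpos (convex_Icc 0 1)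
      (fun s _ => (hφ' s).continuousAt.continuousWithinAt) (fun s _ => (hφ' s).hasDerivWithinAt) ?_
    rintro s hs
    rw [interior_Icc] at hs
    have hdist : ‖AffineMap.lineMap x y s - x‖ = s * ‖y - x‖ := by
      rw [← vsub_eq_sub, AffineMap.lineMap_vsub_left, norm_smul, Real.norm_of_nonneg hs.1.le]
      rfl
    have hinner : ⟪G (AffineMap.lineMap x y s) - G x, y - x⟫ ≤ L * (s * ‖y - x‖) * ‖y - x‖ :=
      (real_inner_le_norm _ _).trans <| mul_le_mul_of_nonneg_right
        ((hlip _ x).trans_eq (by rw [hdist])) (norm_nonneg _)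
    linarith
  have hφ10 := hanti (left_mem_Icc.2 zero_le_one) (right_mem_Icc.2 zero_le_one) zero_le_one
  simp only [φ, AffineMap.lineMap_apply_one, AffineMap.lineMap_apply_zero] at hφ10
  linarith

theorem apply_sub_inv_smul_le_sub_norm_sq_div (hL : 0 < L) (hG : ∀ z, HasGradientAt f (G z) z)
    (hlip : ∀ a b, ‖G a - G b‖ ≤ L * ‖a - b‖) (x : F) :
    f (x - L⁻¹ • G x) ≤ f x - ‖G x‖ ^ 2 / (2 * L) := by
  have h := le_add_inner_add_half_mul_norm_sq hG hlip x (x - L⁻¹ • G x)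
  rw [sub_sub_cancel_left, inner_neg_right, real_inner_smul_right, real_inner_self_eq_norm_sq,
    norm_neg, norm_smul, Real.norm_of_nonneg (inv_nonneg.2 hL.le)] at h
  convert h using 1
  field_simp
  ring

theorem norm_sq_le_two_mul_sub_sInf (hL : 0 < L) (hG : ∀ z, HasGradientAt f (G z) z)
    (hlip : ∀ a b, ‖G a - G b‖ ≤ L * ‖a - b‖) (hbdd : BddBelow (range f)) (x : F) :
    ‖G x‖ ^ 2 ≤ 2 * L * (f x - sInf (range f)) := by
  have hstep := apply_sub_inv_smul_le_sub_norm_sq_div hL hG hlip x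
  have hinf : sInf (range f) ≤ f (x - L⁻¹ • G x) := csInf_le hbdd (mem_range_self _)
  rw [← div_le_iff₀' (by positivity)]
  linarith

theorem sub_le_inner_sub_norm_sq_div (hL : 0 < L) (hf : ConvexOn ℝ univ f)
    (hG : ∀ z, HasGradientAt f (G z) z) (hlip : ∀ a b, ‖G a - G b‖ ≤ L * ‖a - b‖) (x y : F) :
    f x - f y ≤ ⟪G x, x - y⟫ - ‖G x - G y‖ ^ 2 / (2 * L) := by
  -- `ψ` is convex with gradient vanishing at `x`, so `x` minimizes it
  set ψ : F → ℝ := fun z => f z - ⟪G x, z⟫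
  have hψ : ConvexOn ℝ univ ψ := hf.sub ((innerₛₗ ℝ (G x)).concaveOn convex_univ)
  have hGψ : ∀ z, HasGradientAt ψ (G z - G x) z := fun z => by
    rw [hasGradientAt_iff_hasFDerivAt, map_sub]
    exact (hasGradientAt_iff_hasFDerivAt.mp (hG z)).sub
      (InnerProductSpace.toDual ℝ F (G x)).hasFDerivAt
  have hlipψ : ∀ a b, ‖(G a - G x) - (G b - G x)‖ ≤ L * ‖a - b‖ := by
    simpa only [sub_sub_sub_cancel_right] using hlip
  have hmin : ψ x ≤ ψ (y - L⁻¹ • (G y - G x)) := by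
    simpa using hψ.add_inner_le (hGψ x) (y - L⁻¹ • (G y - G x))
  have hstep := apply_sub_inv_smul_le_sub_norm_sq_div hL hGψ hlipψ y
  simp only [ψ, inner_sub_right, norm_sub_rev (G y)] at hmin hstep ⊢
  linarith

end

section

variable {F : Type*} [NormedAddCommGroup F] [InnerProductSpace ℝ F]

theorem Convex.norm_sub_sq_add_norm_sub_sq_le_of_isMinOn {X : Set F} (hX : Convex ℝ X)
    {w p y : F} (hp : p ∈ X) (hmin : IsMinOn (fun z => ‖w - z‖) X p) (hy : y ∈ X) :
    ‖p - y‖ ^ 2 + ‖w - p‖ ^ 2 ≤ ‖w - y‖ ^ 2 := by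
  have : Nonempty X := ⟨⟨p, hp⟩⟩
  have hbdd : BddBelow (range fun z : X => ‖w - z‖) :=
    ⟨0, forall_mem_range.2 fun _ => norm_nonneg _⟩
  have hinf : ‖w - p‖ = ⨅ z : X, ‖w - z‖ :=
    le_antisymm (le_ciInf fun z => isMinOn_iff.1 hmin z z.2) (ciInf_le hbdd ⟨p, hp⟩)
  have hobtuse := (norm_eq_iInf_iff_real_inner_le_zero hX hp).1 hinf y hy
  have hexp := norm_sub_sq_real (w - p) (y - p)
  rw [sub_sub_sub_cancel_right, norm_sub_rev y] at hexp
  linarith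

end

section

variable {F : Type*} [NormedAddCommGroup F] [InnerProductSpace ℝ F] [CompleteSpace F]
  {f : F → ℝ} {G : F → F} {L η : ℝ}

theorem projected_gradient_step_le (hL : 0 < L) (hη : 0 < η) (hηL : η * L < 2)
    (hf : ConvexOn ℝ univ f) (hG : ∀ z, HasGradientAt f (G z) z)
    (hlip : ∀ a b, ‖G a - G b‖ ≤ L * ‖a - b‖) (hbdd : BddBelow (range f))
    {X : Set F} (hX : Convex ℝ X) {x p y : F} (hp : p ∈ X)
    (hmin : IsMinOn (fun z => ‖x - η • G x - z‖) X p) (hy : y ∈ X) :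
    (2 - η * L) * η * (f x - f y) ≤ ‖x - y‖ ^ 2 - ‖p - y‖ ^ 2 +
      η ^ 2 * L * (f y - sInf (range f)) + η ^ 2 / (2 - η * L) * ‖G y‖ ^ 2 := by
  have hproj := hX.norm_sub_sq_add_norm_sub_sq_le_of_isMinOn hp hmin hy
  have hexp : ‖x - η • G x - y‖ ^ 2 =
      ‖x - y‖ ^ 2 - 2 * η * ⟪G x, x - y⟫ + η ^ 2 * ‖G x‖ ^ 2 := by
    rw [sub_right_comm, norm_sub_sq_real, real_inner_smul_right, norm_smul,
      Real.norm_of_nonneg hη.le, real_inner_comm]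
    ring
  have hcoco := sub_le_inner_sub_norm_sq_div hL hf hG hlip x y
  have hself := norm_sq_le_two_mul_sub_sInf hL hG hlip hbdd x
  have hsq := half_mul_norm_sq_sub_norm_sub_sq_div_le hL hη.le hηL (G x) (G y)
  linear_combination (2 * η) * hcoco + hproj + η * hsq + (η ^ 2 / 2) * hself +
    sq_nonneg ‖x - η • G x - p‖ + hexp

end

theorem stmt10_general (n T : ℕ) (L η : ℝ) (hL : 0 < L)
    (hη : η ∈ Set.Ioo 0 (2 / L))
    (ℓ : ℕ → EuclideanSpace ℝ (Fin n) → ℝ)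
    (hconv : ∀ t, ConvexOn ℝ Set.univ (ℓ t))
    (hdiff : ∀ t, Differentiable ℝ (ℓ t))
    (hsmooth : ∀ t, ∀ x y, ‖gradient (ℓ t) x - gradient (ℓ t) y‖ ≤ L * ‖x - y‖)
    (hbdd : ∀ t, BddBelow (Set.range (ℓ t)))
    (X : Set (EuclideanSpace ℝ (Fin n))) (hXconv : Convex ℝ X)
    (proj : EuclideanSpace ℝ (Fin n) → EuclideanSpace ℝ (Fin n))
    (hprojX : ∀ y, proj y ∈ X)
    (hproj : ∀ y, ∀ z ∈ X, ‖y - proj y‖ ≤ ‖y - z‖)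
    (x : ℕ → EuclideanSpace ℝ (Fin n))
    (hrec : ∀ t < T, x (t + 1) = proj (x t - η • gradient (ℓ t) (x t))) :
    ∀ y ∈ X,
      ∑ t ∈ Finset.range T, (ℓ t (x t) - ℓ t y) ≤
        ‖x 0 - y‖ ^ 2 / ((2 - η * L) * η) +
          (η / (2 - η * L)) *
            (L * (∑ t ∈ Finset.range T, (ℓ t y - sInf (Set.range (ℓ t)))) +
              (1 / (2 - η * L)) * ∑ t ∈ Finset.range T, ‖gradient (ℓ t) y‖ ^ 2) := by
  intro y hy
  obtain ⟨hη, hηL⟩ := hη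
  rw [lt_div_iff₀ hL] at hηL
  have hA : 0 < 2 - η * L := by linarith
  have hstep : ∀ t ∈ range T, (2 - η * L) * η * (ℓ t (x t) - ℓ t y) ≤
      ‖x t - y‖ ^ 2 - ‖x (t + 1) - y‖ ^ 2 + η ^ 2 * L * (ℓ t y - sInf (range (ℓ t))) +
        η ^ 2 / (2 - η * L) * ‖gradient (ℓ t) y‖ ^ 2 := fun t ht => by
    rw [hrec t (mem_range.1 ht)]
    exact projected_gradient_step_le hL hη hηL (hconv t) (fun z => (hdiff t z).hasGradientAt)
      (hsmooth t) (hbdd t) hXconv (hprojX _) (fun z hz => hproj _ z hz) hy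
  have hsum := sum_le_sum hstep
  rw [← mul_sum, sum_add_distrib, sum_add_distrib, sum_range_sub' (fun t => ‖x t - y‖ ^ 2),
    ← mul_sum, ← mul_sum] at hsum
  rw [← mul_le_mul_iff_right₀ (by positivity : 0 < (2 - η * L) * η)]
  calc (2 - η * L) * η * ∑ t ∈ range T, (ℓ t (x t) - ℓ t y)
      ≤ ‖x 0 - y‖ ^ 2 + η ^ 2 * L * ∑ t ∈ range T, (ℓ t y - sInf (range (ℓ t))) +
          η ^ 2 / (2 - η * L) * ∑ t ∈ range T, ‖gradient (ℓ t) y‖ ^ 2 := by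
        linarith [sq_nonneg ‖x T - y‖]
    _ = _ := by field_simp; ring

theorem stmt10 (n T : ℕ) (L D η : ℝ) (hL : 0 < L) (hD : 0 < D)
    (hη : η ∈ Set.Ioo 0 (2 / L))
    (ℓ : ℕ → EuclideanSpace ℝ (Fin n) → ℝ)
    (hconv : ∀ t, ConvexOn ℝ Set.univ (ℓ t))
    (hdiff : ∀ t, Differentiable ℝ (ℓ t))
    (hsmooth : ∀ t, ∀ x y, ‖gradient (ℓ t) x - gradient (ℓ t) y‖ ≤ L * ‖x - y‖)
    (hbdd : ∀ t, BddBelow (Set.range (ℓ t)))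
    (X : Set (EuclideanSpace ℝ (Fin n))) (hXconv : Convex ℝ X) (hXclosed : IsClosed X)
    (hXdiam : Metric.diam X ≤ D)
    (proj : EuclideanSpace ℝ (Fin n) → EuclideanSpace ℝ (Fin n))
    (hprojX : ∀ y, proj y ∈ X)
    (hproj : ∀ y, ∀ z ∈ X, ‖y - proj y‖ ≤ ‖y - z‖)
    (x : ℕ → EuclideanSpace ℝ (Fin n)) (hx0 : x 0 ∈ X)
    (hrec : ∀ t < T, x (t + 1) = proj (x t - η • gradient (ℓ t) (x t))) :
    ∀ y ∈ X,
      ∑ t ∈ Finset.range T, (ℓ t (x t) - ℓ t y) ≤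
        ‖x 0 - y‖ ^ 2 / ((2 - η * L) * η) +
          (η / (2 - η * L)) *
            (L * (∑ t ∈ Finset.range T, (ℓ t y - sInf (Set.range (ℓ t)))) +
              (1 / (2 - η * L)) * ∑ t ∈ Finset.range T, ‖gradient (ℓ t) y‖ ^ 2) :=
  stmt10_general n T L η hL hη ℓ hconv hdiff hsmooth hbdd X hXconv proj hprojX hproj x hrec
end

section
/- (AdaGrad-Norm G* regret) Let ℓ_1,...,ℓ_T : R^n → R be convex and L-smooth, X closed convex with diameter ≤ D. Suppose the iterates x^t ∈ X satisfy the linearized regret bound Σ_{t=1}^T ⟨∇ℓ_t(x^t), x^t − x⟩ ≤ √2·D·sqrt(Σ_{t=1}^T ‖∇ℓ_t(x^t)‖²) for all x ∈ X. Then Σ_{t=1}^T [ℓ_t(x^t) − ℓ_t(x)] ≤ √2·D·sqrt(Σ_{t=1}^T ‖∇ℓ_t(x)‖²) + L·D² for all x ∈ X. -/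
/-!
Dual strong convexity `f x + ⟪∇f x, y - x⟫ + ‖∇f x - ∇f y‖² / (2L) ≤ f y` of a convex `L`-smooth
function bounds each round's regret by the linearized regret minus `‖∇ℓ_t(x^t) - ∇ℓ_t(y)‖² / (2L)`.
By Minkowski's inequality, `√(Σ ‖∇ℓ_t(x^t)‖²)` exceeds `√(Σ ‖∇ℓ_t(y)‖²)` by at most
`r = √(Σ ‖∇ℓ_t(x^t) - ∇ℓ_t(y)‖²)`, and the loss `√2 D r` is paid for by the quadratic
term: `√2 D r - r² / (2L) ≤ L D²`.
-/

open Finset InnerProductSpace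

section Smooth

variable {F : Type*} [NormedAddCommGroup F] [InnerProductSpace ℝ F] [CompleteSpace F]
  {f : F → ℝ} {G : F → F} {L : ℝ}

theorem HasGradientAt.hasDerivAt_comp_add_smul {g a v : F} {t : ℝ}
    (hf : HasGradientAt f g (a + t • v)) :
    HasDerivAt (fun s : ℝ => f (a + s • v)) ⟪g, v⟫_ℝ t := by
  have hline : HasDerivAt (fun s : ℝ => a + s • v) v t := by
    simpa using ((hasDerivAt_id t).smul_const v).const_add a
  simpa [Function.comp_def] using (hasGradientAt_iff_hasFDerivAt.1 hf).comp_hasDerivAt t hline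

theorem HasGradientAt.sub_inner {g x : F} (hf : HasGradientAt f g x) (c : F) :
    HasGradientAt (fun z => f z - ⟪c, z⟫_ℝ) (g - c) x := by
  rw [hasGradientAt_iff_hasFDerivAt, map_sub]
  exact (hasGradientAt_iff_hasFDerivAt.1 hf).sub (toDual ℝ F c).hasFDerivAt

theorem ConvexOn.add_inner_le_of_hasGradientAt (hc : ConvexOn ℝ Set.univ f) {x g : F}
    (hf : HasGradientAt f g x) (y : F) :
    f x + ⟪g, y - x⟫_ℝ ≤ f y := by
  have hline : ConvexOn ℝ Set.univ (fun s : ℝ => f (x + s • (y - x))) := by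
    have hcomp : (fun s : ℝ => f (x + s • (y - x))) = f ∘ AffineMap.lineMap x y := by
      funext s
      simp [AffineMap.lineMap_apply, add_comm]
    rw [hcomp]
    simpa using hc.comp_affineMap (AffineMap.lineMap x y)
  have hslope := hline.le_slope_of_hasDerivAt (Set.mem_univ 0) (Set.mem_univ 1) one_pos
    (HasGradientAt.hasDerivAt_comp_add_smul (by simpa using hf))
  simp only [slope_def_field, zero_smul, add_zero, one_smul, add_sub_cancel, sub_zero,
    div_one] at hslope
  linarith

theorem le_add_inner_add_norm_sq_of_lipschitz_gradient
    (hG : ∀ z, HasGradientAt f (G z) z) (hLip : ∀ a b, ‖G a - G b‖ ≤ L * ‖a - b‖) (x y : F) :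
    f y ≤ f x + ⟪G x, y - x⟫_ℝ + L / 2 * ‖y - x‖ ^ 2 := by
  set v := y - x
  set φ : ℝ → ℝ := fun t => f (x + t • v) - t * ⟪G x, v⟫_ℝ - L / 2 * ‖v‖ ^ 2 * t ^ 2
  have hφ' : ∀ t : ℝ, HasDerivAt φ (⟪G (x + t • v) - G x, v⟫_ℝ - L * ‖v‖ ^ 2 * t) t := by
    intro t
    refine (((hG _).hasDerivAt_comp_add_smul.sub (hasDerivAt_mul_const _)).sub
      ((hasDerivAt_pow 2 t).const_mul (L / 2 * ‖v‖ ^ 2))).congr_deriv ?_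
    rw [inner_sub_left]
    ring
  have hanti : AntitoneOn φ (Set.Icc 0 1) := by
    refine antitoneOn_of_hasDerivWithinAt_nonpos (convex_Icc 0 1)
      (continuous_iff_continuousAt.2 fun t => (hφ' t).continuousAt).continuousOn
      (fun t _ => (hφ' t).hasDerivWithinAt) ?_
    rw [interior_Icc]
    intro t ht
    have hstep : ‖G (x + t • v) - G x‖ ≤ L * (t * ‖v‖) := by
      simpa [norm_smul, abs_of_pos ht.1] using hLip (x + t • v) x
    nlinarith [real_inner_le_norm (G (x + t • v) - G x) v, norm_nonneg v]
  have := hanti ⟨le_rfl, zero_le_one⟩ ⟨zero_le_one, le_rfl⟩ zero_le_one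
  simp only [φ, v, zero_smul, add_zero, one_smul, add_sub_cancel] at this
  linarith

theorem apply_sub_smul_le_of_lipschitz_gradient (hL : 0 < L)
    (hG : ∀ z, HasGradientAt f (G z) z) (hLip : ∀ a b, ‖G a - G b‖ ≤ L * ‖a - b‖) (y : F) :
    f (y - L⁻¹ • G y) ≤ f y - 1 / (2 * L) * ‖G y‖ ^ 2 := by
  have h := le_add_inner_add_norm_sq_of_lipschitz_gradient hG hLip y (y - L⁻¹ • G y)
  rw [sub_sub_cancel_left, inner_neg_right, norm_neg, real_inner_smul_right,
    real_inner_self_eq_norm_sq, norm_smul, Real.norm_of_nonneg (inv_nonneg.2 hL.le)] at h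
  convert h using 1
  field_simp
  ring

theorem ConvexOn.add_inner_add_norm_sub_sq_le (hc : ConvexOn ℝ Set.univ f) (hL : 0 < L)
    (hG : ∀ z, HasGradientAt f (G z) z) (hLip : ∀ a b, ‖G a - G b‖ ≤ L * ‖a - b‖) (x y : F) :
    f x + ⟪G x, y - x⟫_ℝ + 1 / (2 * L) * ‖G x - G y‖ ^ 2 ≤ f y := by
  -- `φ` is minimised at `x`, and a gradient step from `y` lowers it by `‖∇φ y‖² / (2L)`.
  set φ : F → ℝ := fun z => f z - ⟪G x, z⟫_ℝ
  have hφ : ∀ z, HasGradientAt φ (G z - G x) z := fun z => (hG z).sub_inner (G x)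
  have hmin : φ x ≤ φ (y - L⁻¹ • (G y - G x)) := by
    have := hc.add_inner_le_of_hasGradientAt (hG x) (y - L⁻¹ • (G y - G x))
    simp only [φ, inner_sub_right] at this ⊢
    linarith
  have hstep := apply_sub_smul_le_of_lipschitz_gradient hL hφ
    (fun a b => by simpa using hLip a b) y
  simp only [φ, inner_sub_right, norm_sub_rev (G y)] at hmin hstep ⊢
  linarith

end Smooth

section SquareSums

variable {ι E : Type*} [SeminormedAddCommGroup E]

theorem sqrt_sum_norm_sq_le_add (s : Finset ι) (a b : ι → E) :
    √(∑ i ∈ s, ‖a i‖ ^ 2) ≤ √(∑ i ∈ s, ‖b i‖ ^ 2) + √(∑ i ∈ s, ‖a i - b i‖ ^ 2) := by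
  have h := norm_le_norm_add_norm_sub' (WithLp.toLp 2 fun i : s => a i : PiLp 2 fun _ : s => E)
    (WithLp.toLp 2 fun i : s => b i)
  simpa only [PiLp.norm_eq_of_L2, ← WithLp.toLp_sub, PiLp.toLp_apply, Pi.sub_apply,
    sum_coe_sort s fun i => ‖a i‖ ^ 2, Finset.sum_coe_sort s fun i => ‖b i‖ ^ 2,
    sum_coe_sort s fun i => ‖a i - b i‖ ^ 2] using h

theorem mul_sqrt_sum_norm_sq_sub_le (s : Finset ι) (a b : ι → E) {α β : ℝ}
    (hα : 0 ≤ α) (hβ : 0 < β) :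
    α * √(∑ i ∈ s, ‖a i‖ ^ 2) - β * ∑ i ∈ s, ‖a i - b i‖ ^ 2 ≤
      α * √(∑ i ∈ s, ‖b i‖ ^ 2) + α ^ 2 / (4 * β) := by
  set r := √(∑ i ∈ s, ‖a i - b i‖ ^ 2)
  have hr : r ^ 2 = ∑ i ∈ s, ‖a i - b i‖ ^ 2 :=
    Real.sq_sqrt (sum_nonneg fun i _ => sq_nonneg _)
  have hmink := mul_le_mul_of_nonneg_left (sqrt_sum_norm_sq_le_add s a b) hα
  have hquad : α * r - β * r ^ 2 ≤ α ^ 2 / (4 * β) := by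
    rw [le_div_iff₀ (by positivity)]
    nlinarith [sq_nonneg (2 * β * r - α)]
  rw [← hr]
  linarith

end SquareSums

theorem stmt11_general (n T : ℕ) (L D : ℝ) (hL : 0 < L) (hD : 0 < D)
    (ℓ : ℕ → EuclideanSpace ℝ (Fin n) → ℝ)
    (hconv : ∀ t, ConvexOn ℝ Set.univ (ℓ t))
    (hdiff : ∀ t, Differentiable ℝ (ℓ t))
    (hsmooth : ∀ t, ∀ x y, ‖gradient (ℓ t) x - gradient (ℓ t) y‖ ≤ L * ‖x - y‖)
    (X : Set (EuclideanSpace ℝ (Fin n)))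
    (x : ℕ → EuclideanSpace ℝ (Fin n))
    (hlin : ∀ y ∈ X,
      ∑ t ∈ Finset.range T, ⟪gradient (ℓ t) (x t), x t - y⟫_ℝ ≤
        Real.sqrt 2 * D * Real.sqrt (∑ t ∈ Finset.range T, ‖gradient (ℓ t) (x t)‖ ^ 2)) :
    ∀ y ∈ X,
      ∑ t ∈ Finset.range T, (ℓ t (x t) - ℓ t y) ≤
        Real.sqrt 2 * D * Real.sqrt (∑ t ∈ Finset.range T, ‖gradient (ℓ t) y‖ ^ 2) +
          L * D ^ 2 := by
  intro y hy
  have hround : ∀ t, ℓ t (x t) - ℓ t y ≤ ⟪gradient (ℓ t) (x t), x t - y⟫_ℝ -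
      1 / (2 * L) * ‖gradient (ℓ t) (x t) - gradient (ℓ t) y‖ ^ 2 := by
    intro t
    have := (hconv t).add_inner_add_norm_sub_sq_le hL (fun z => (hdiff t z).hasGradientAt)
      (hsmooth t) (x t) y
    rw [← neg_sub (x t), inner_neg_right] at this
    linarith
  have hconst : (√2 * D) ^ 2 / (4 * (1 / (2 * L))) = L * D ^ 2 := by
    rw [mul_pow, Real.sq_sqrt zero_le_two]
    field_simp
    norm_num
  calc ∑ t ∈ range T, (ℓ t (x t) - ℓ t y)
      ≤ ∑ t ∈ range T, ⟪gradient (ℓ t) (x t), x t - y⟫_ℝ -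
          1 / (2 * L) * ∑ t ∈ range T, ‖gradient (ℓ t) (x t) - gradient (ℓ t) y‖ ^ 2 := by
        rw [mul_sum, ← sum_sub_distrib]
        exact sum_le_sum fun t _ => hround t
    _ ≤ √2 * D * √(∑ t ∈ range T, ‖gradient (ℓ t) (x t)‖ ^ 2) -
          1 / (2 * L) * ∑ t ∈ range T, ‖gradient (ℓ t) (x t) - gradient (ℓ t) y‖ ^ 2 :=
        sub_le_sub_right (hlin y hy) _
    _ ≤ √2 * D * √(∑ t ∈ range T, ‖gradient (ℓ t) y‖ ^ 2) + L * D ^ 2 := by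
        rw [← hconst]
        exact mul_sqrt_sum_norm_sq_sub_le _ _ _ (by positivity) (by positivity)

theorem stmt11 (n T : ℕ) (L D : ℝ) (hL : 0 < L) (hD : 0 < D)
    (ℓ : ℕ → EuclideanSpace ℝ (Fin n) → ℝ)
    (hconv : ∀ t, ConvexOn ℝ Set.univ (ℓ t))
    (hdiff : ∀ t, Differentiable ℝ (ℓ t))
    (hsmooth : ∀ t, ∀ x y, ‖gradient (ℓ t) x - gradient (ℓ t) y‖ ≤ L * ‖x - y‖)
    (X : Set (EuclideanSpace ℝ (Fin n))) (hXconv : Convex ℝ X) (hXclosed : IsClosed X)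
    (hXdiam : Metric.diam X ≤ D)
    (x : ℕ → EuclideanSpace ℝ (Fin n)) (hxX : ∀ t, x t ∈ X)
    (hlin : ∀ y ∈ X,
      ∑ t ∈ Finset.range T, ⟪gradient (ℓ t) (x t), x t - y⟫_ℝ ≤
        Real.sqrt 2 * D * Real.sqrt (∑ t ∈ Finset.range T, ‖gradient (ℓ t) (x t)‖ ^ 2)) :
    ∀ y ∈ X,
      ∑ t ∈ Finset.range T, (ℓ t (x t) - ℓ t y) ≤
        Real.sqrt 2 * D * Real.sqrt (∑ t ∈ Finset.range T, ‖gradient (ℓ t) y‖ ^ 2) +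
          L * D ^ 2 :=
  stmt11_general n T L D hL hD ℓ hconv hdiff hsmooth X x hlin
end

section
/- (Generic conversion of adaptive linear regret) Let ℓ_1,...,ℓ_T be convex and L-smooth on R^n, and suppose the iterates x^t satisfy, for some constant C > 0 and all x in a set X, Σ_{t=1}^T ⟨∇ℓ_t(x^t), x^t − x⟩ ≤ C·sqrt(Σ_{t=1}^T ‖∇ℓ_t(x^t)‖²). Then Σ_{t=1}^T [ℓ_t(x^t) − ℓ_t(x)] ≤ C·sqrt(Σ_{t=1}^T ‖∇ℓ_t(x)‖²) + (L·C²)/2 for all x ∈ X. -/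
/-!
Cocoercivity of the gradient of a convex `L`-smooth function gives, for each round,
`ℓ_t(x^t) - ℓ_t(x) ≤ ⟪∇ℓ_t(x^t), x^t - x⟫ - ‖∇ℓ_t(x) - ∇ℓ_t(x^t)‖² / (2L)`. Summing and using the
linear regret bound leaves `C √(Σ‖∇ℓ_t(x^t)‖²) - Σ‖∇ℓ_t(x) - ∇ℓ_t(x^t)‖² / (2L)`. By Minkowski the
square root is at most `√(Σ‖∇ℓ_t(x)‖²) + D` with `D² = Σ‖∇ℓ_t(x) - ∇ℓ_t(x^t)‖²`, and
`C D - D² / (2L) ≤ L C² / 2`.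
-/

open Finset InnerProductSpace

section Smooth

variable {F : Type*} [NormedAddCommGroup F] [InnerProductSpace ℝ F] [CompleteSpace F]
  {f : F → ℝ}

open AffineMap

theorem hasDerivAt_comp_lineMap {a b : F} {s : ℝ} (hf : DifferentiableAt ℝ f (lineMap a b s)) :
    HasDerivAt (fun s => f (lineMap a b s)) ⟪gradient f (lineMap a b s), b - a⟫_ℝ s := by
  simpa [Function.comp_def] using hf.hasGradientAt.hasFDerivAt.comp_hasDerivAt s hasDerivAt_lineMap

theorem ConvexOn.inner_gradient_le_sub (hc : ConvexOn ℝ Set.univ f) {a : F}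
    (hf : DifferentiableAt ℝ f a) (b : F) : ⟪gradient f a, b - a⟫_ℝ ≤ f b - f a := by
  have hline : ConvexOn ℝ Set.univ (f ∘ lineMap a b) := hc.comp_affineMap (lineMap a b)
  have hderiv := hasDerivAt_comp_lineMap (b := b) (s := 0) (by simpa using hf)
  simpa [slope_def_field] using
    hline.le_slope_of_hasDerivAt (Set.mem_univ 0) (Set.mem_univ 1) zero_lt_one hderiv

theorem le_add_inner_gradient_add_sq_of_lipschitz_gradient (hf : Differentiable ℝ f) {L : ℝ}
    (hlip : ∀ x y, ‖gradient f x - gradient f y‖ ≤ L * ‖x - y‖) (a b : F) :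
    f b ≤ f a + ⟪gradient f a, b - a⟫_ℝ + L / 2 * ‖b - a‖ ^ 2 := by
  -- `f` along the segment minus its quadratic upper model is nonincreasing
  set r : ℝ → ℝ := fun s =>
    f (lineMap a b s) - s * ⟪gradient f a, b - a⟫_ℝ - L / 2 * s ^ 2 * ‖b - a‖ ^ 2
  have hr (s : ℝ) : HasDerivAt r
      (⟪gradient f (lineMap a b s) - gradient f a, b - a⟫_ℝ - L * s * ‖b - a‖ ^ 2) s := by
    have hline := hasDerivAt_comp_lineMap (a := a) (b := b) (hf (lineMap a b s))
    refine ((hline.sub ((hasDerivAt_id s).mul_const ⟪gradient f a, b - a⟫_ℝ)).sub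
      (((hasDerivAt_pow 2 s).const_mul (L / 2)).mul_const (‖b - a‖ ^ 2))).congr_deriv ?_
    simp only [inner_sub_left]
    ring
  have hanti : AntitoneOn r (Set.Ici 0) := by
    refine antitoneOn_of_deriv_nonpos (convex_Ici 0)
      (fun s _ => (hr s).continuousAt.continuousWithinAt)
      (fun s _ => (hr s).differentiableAt.differentiableWithinAt) fun s hs => ?_
    rw [interior_Ici, Set.mem_Ioi] at hs
    rw [(hr s).deriv, sub_nonpos]
    calc ⟪gradient f (lineMap a b s) - gradient f a, b - a⟫_ℝ
        ≤ ‖gradient f (lineMap a b s) - gradient f a‖ * ‖b - a‖ := real_inner_le_norm _ _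
      _ ≤ L * (s * ‖b - a‖) * ‖b - a‖ := by
          gcongr
          simpa [lineMap_apply_module', norm_smul, abs_of_pos hs] using hlip (lineMap a b s) a
      _ = L * s * ‖b - a‖ ^ 2 := by ring
  have hr01 := hanti (Set.mem_Ici.2 le_rfl) (Set.mem_Ici.2 zero_le_one) zero_le_one
  simp only [r, lineMap_apply_zero, lineMap_apply_one] at hr01
  linarith

theorem ConvexOn.sq_norm_sub_gradient_le (hc : ConvexOn ℝ Set.univ f) (hf : Differentiable ℝ f)
    {L : ℝ} (hL : 0 < L) (hlip : ∀ x y, ‖gradient f x - gradient f y‖ ≤ L * ‖x - y‖) (x y : F) :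
    1 / (2 * L) * ‖gradient f x - gradient f y‖ ^ 2 ≤ f x - f y - ⟪gradient f y, x - y⟫_ℝ := by
  set d := gradient f x - gradient f y
  -- compare `f` at a gradient step from `x` with its supporting hyperplane at `y`
  set z := x - (1 / L) • d
  have hdescent := le_add_inner_gradient_add_sq_of_lipschitz_gradient hf hlip x z
  have hsupport := hc.inner_gradient_le_sub (hf y) z
  have hzx : z - x = -(1 / L) • d := by simp [z, neg_smul]
  have hzy : z - y = (x - y) + (z - x) := by abel
  rw [hzy, inner_add_right] at hsupport
  have hstep : ⟪gradient f x, z - x⟫_ℝ - ⟪gradient f y, z - x⟫_ℝ + L / 2 * ‖z - x‖ ^ 2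
      = -(1 / (2 * L)) * ‖d‖ ^ 2 := by
    rw [← inner_sub_left, hzx, real_inner_smul_right, real_inner_self_eq_norm_sq, norm_smul,
      Real.norm_eq_abs, abs_neg, abs_of_pos (one_div_pos.2 hL)]
    field_simp
    ring
  linarith

end Smooth

section Sequences

variable {ι E : Type*} [SeminormedAddCommGroup E]

theorem Finset.sqrt_sum_norm_sq_le (s : Finset ι) (u v : ι → E) :
    √(∑ i ∈ s, ‖u i‖ ^ 2) ≤ √(∑ i ∈ s, ‖v i‖ ^ 2) + √(∑ i ∈ s, ‖v i - u i‖ ^ 2) := by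
  have hnorm (w : ι → E) : √(∑ i ∈ s, ‖w i‖ ^ 2) = ‖WithLp.toLp 2 (fun i : s => w i)‖ := by
    rw [PiLp.norm_eq_of_L2, ← s.sum_coe_sort]
  rw [hnorm u, hnorm v, hnorm (fun i => v i - u i)]
  calc ‖WithLp.toLp 2 (fun i : s => u i)‖
      = ‖WithLp.toLp 2 (fun i : s => v i) - WithLp.toLp 2 (fun i : s => v i - u i)‖ := by
        rw [← WithLp.toLp_sub]
        congr 2
        ext i
        simp
    _ ≤ _ := norm_sub_le _ _

theorem Finset.le_sqrt_sum_norm_sq_add_of_le_sub (s : Finset ι) (u v : ι → E) {α β R : ℝ}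
    (hα : 0 ≤ α) (hβ : 0 < β)
    (h : R ≤ α * √(∑ i ∈ s, ‖u i‖ ^ 2) - β * ∑ i ∈ s, ‖v i - u i‖ ^ 2) :
    R ≤ α * √(∑ i ∈ s, ‖v i‖ ^ 2) + α ^ 2 / (4 * β) := by
  set D := √(∑ i ∈ s, ‖v i - u i‖ ^ 2)
  have hD : D ^ 2 = ∑ i ∈ s, ‖v i - u i‖ ^ 2 := Real.sq_sqrt (by positivity)
  have hmink := mul_le_mul_of_nonneg_left (s.sqrt_sum_norm_sq_le u v) hα
  have hamgm : α * D - β * D ^ 2 ≤ α ^ 2 / (4 * β) := by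
    rw [le_div_iff₀ (by positivity)]
    nlinarith [sq_nonneg (α - 2 * β * D)]
  nlinarith

end Sequences

theorem stmt12 (n T : ℕ) (L C : ℝ) (hL : 0 < L) (hC : 0 < C)
    (ℓ : ℕ → EuclideanSpace ℝ (Fin n) → ℝ)
    (hconv : ∀ t, ConvexOn ℝ Set.univ (ℓ t))
    (hdiff : ∀ t, Differentiable ℝ (ℓ t))
    (hsmooth : ∀ t, ∀ x y, ‖gradient (ℓ t) x - gradient (ℓ t) y‖ ≤ L * ‖x - y‖)
    (X : Set (EuclideanSpace ℝ (Fin n)))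
    (x : ℕ → EuclideanSpace ℝ (Fin n))
    (hlin : ∀ y ∈ X,
      ∑ t ∈ Finset.range T, ⟪gradient (ℓ t) (x t), x t - y⟫_ℝ ≤
        C * Real.sqrt (∑ t ∈ Finset.range T, ‖gradient (ℓ t) (x t)‖ ^ 2)) :
    ∀ y ∈ X,
      ∑ t ∈ Finset.range T, (ℓ t (x t) - ℓ t y) ≤
        C * Real.sqrt (∑ t ∈ Finset.range T, ‖gradient (ℓ t) y‖ ^ 2) + L * C ^ 2 / 2 := by
  intro y hy
  have hregret : ∑ t ∈ range T, (ℓ t (x t) - ℓ t y) ≤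
      C * √(∑ t ∈ range T, ‖gradient (ℓ t) (x t)‖ ^ 2) -
        1 / (2 * L) * ∑ t ∈ range T, ‖gradient (ℓ t) y - gradient (ℓ t) (x t)‖ ^ 2 :=
    calc ∑ t ∈ range T, (ℓ t (x t) - ℓ t y)
        ≤ ∑ t ∈ range T, (⟪gradient (ℓ t) (x t), x t - y⟫_ℝ -
            1 / (2 * L) * ‖gradient (ℓ t) y - gradient (ℓ t) (x t)‖ ^ 2) := by
          refine sum_le_sum fun t _ => ?_
          have h := (hconv t).sq_norm_sub_gradient_le (hdiff t) hL (hsmooth t) y (x t)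
          rw [← neg_sub (x t) y, inner_neg_right] at h
          linarith
      _ = ∑ t ∈ range T, ⟪gradient (ℓ t) (x t), x t - y⟫_ℝ -
            1 / (2 * L) * ∑ t ∈ range T, ‖gradient (ℓ t) y - gradient (ℓ t) (x t)‖ ^ 2 := by
          rw [sum_sub_distrib, mul_sum]
      _ ≤ _ := sub_le_sub_right (hlin y hy) _
  calc _ ≤ _ := (range T).le_sqrt_sum_norm_sq_add_of_le_sub _ _ hC.le (by positivity) hregret
    _ = _ := by
      field_simp
      ring
end
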